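/- arXiv:1803.04672 — 2 statements merged into one kernel-verified Lean document; each statement's English description precedes it below -/
import Mathlib

section
/- Let X be a completely regular Hausdorff (Tychonoff) space and let H be a non-vanishing closed ideal of C_B(X). Then the following are equivalent: (1) sp(H) is countably compact; (2) for every sequence H₁, H₂, … of closed subideals of H, if H equals the closure in C_B(X) of ∑_{n=1}^∞ H_n, then H equals the closure of ∑_{n=1}^m H_n for some positive integer m; (3) for every increasing sequence H₁ ⊆ H₂ ⊆ ⋯ of proper closed subideals of H, H is not equal to the closure in C_B(X) of ⋃_{n=1}^∞ H_n. -/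
open BoundedContinuousFunction Set Filter Topology

section Preamble

variable {X : Type*} [TopologicalSpace X] {𝕜 : Type*} [RCLike 𝕜]

theorem betaExt_aux (f : X →ᵇ 𝕜) :
    Continuous (fun x => (⟨f x, by
      simpa [Metric.mem_closedBall, dist_zero_right] using f.norm_coe_le_norm x⟩ :
        Metric.closedBall (0 : 𝕜) ‖f‖)) :=
  f.continuous.subtype_mk _

/-- `f_β`, the unique continuous extension of a bounded continuous function `f : X → 𝕜` to the
Stone–Čech compactification `βX`. -/
noncomputable def betaExt (f : X →ᵇ 𝕜) : StoneCech X → 𝕜 :=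
  haveI : CompactSpace (Metric.closedBall (0 : 𝕜) ‖f‖) :=
    isCompact_iff_compactSpace.mp (isCompact_closedBall 0 ‖f‖)
  fun p => (stoneCechExtend (betaExt_aux f) p).1

theorem betaExt_unit (f : X →ᵇ 𝕜) (x : X) : betaExt f (stoneCechUnit x) = f x := by
  haveI : CompactSpace (Metric.closedBall (0 : 𝕜) ‖f‖) :=
    isCompact_iff_compactSpace.mp (isCompact_closedBall 0 ‖f‖)
  exact congrArg Subtype.val (congrFun (stoneCechExtend_extends (betaExt_aux f)) x)

theorem continuous_betaExt (f : X →ᵇ 𝕜) : Continuous (betaExt f) := by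
  haveI : CompactSpace (Metric.closedBall (0 : 𝕜) ‖f‖) :=
    isCompact_iff_compactSpace.mp (isCompact_closedBall 0 ‖f‖)
  exact continuous_subtype_val.comp (continuous_stoneCechExtend _)

/-- `λ_G X`, the union over `g ∈ G` of the cozero-sets in `βX` of the extensions `g_β`. -/
def lambdaSet (G : Ideal (X →ᵇ 𝕜)) : Set (StoneCech X) :=
  ⋃ g ∈ G, {p | betaExt g p ≠ 0}

end Preamble

/-- A (Hausdorff) space is countably compact if every countable open cover has a finite
subcover. -/
def CountablyCompactSpace' (Y : Type*) [TopologicalSpace Y] : Prop :=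
  T2Space Y ∧
    ∀ U : ℕ → Set Y, (∀ n, IsOpen (U n)) → (⋃ n, U n) = univ →
      ∃ t : Finset ℕ, (⋃ n ∈ t, U n) = univ

/-! Extension to `βX` is an isometric ring isomorphism `C_B(X) ≃ C(βX)`; it carries an ideal `G`
to an ideal whose cozero-set union is `λ_G X`. In `C(βX)` a closed ideal consists of the functions
vanishing off its cozero-set union, so closed ideals correspond to open subsets of `βX`, the
closure of a sum of ideals corresponding to the union of the open sets. Conditions (2) and (3)
thus become covering properties of the open set `λ_H X`: every countable cover by open subsets
has a finite subcover, resp. `λ_H X` is not the union of an increasing sequence of proper open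
subsets. Both are equivalent to countable compactness of `λ_H X`. -/

section BetaExtension

variable {X : Type*} [TopologicalSpace X] {𝕜 : Type*} [RCLike 𝕜]

theorem betaExt_eq_of_continuous {f : X →ᵇ 𝕜} {g : StoneCech X → 𝕜} (hg : Continuous g)
    (hgf : ∀ x, g (stoneCechUnit x) = f x) : betaExt f = g :=
  stoneCech_hom_ext (continuous_betaExt f) hg <|
    funext fun x => (betaExt_unit f x).trans (hgf x).symm

theorem norm_betaExt_le (f : X →ᵇ 𝕜) (p : StoneCech X) : ‖betaExt f p‖ ≤ ‖f‖ := by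
  have : CompactSpace (Metric.closedBall (0 : 𝕜) ‖f‖) :=
    isCompact_iff_compactSpace.mp (isCompact_closedBall 0 ‖f‖)
  have h := (stoneCechExtend (betaExt_aux f) p).2
  rw [Metric.mem_closedBall, dist_zero_right] at h
  exact h

noncomputable def betaEquiv : (X →ᵇ 𝕜) ≃+* C(StoneCech X, 𝕜) where
  toFun f := ⟨betaExt f, continuous_betaExt f⟩
  invFun g := (mkOfCompact g).compContinuous ⟨stoneCechUnit, continuous_stoneCechUnit⟩
  left_inv f := ext fun x => betaExt_unit f x
  right_inv g := ContinuousMap.ext <| congrFun <| betaExt_eq_of_continuous g.continuous fun _ => rfl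
  map_mul' f g := ContinuousMap.ext <| congrFun <|
    betaExt_eq_of_continuous ((continuous_betaExt f).mul (continuous_betaExt g)) fun x => by
      simp [betaExt_unit]
  map_add' f g := ContinuousMap.ext <| congrFun <|
    betaExt_eq_of_continuous ((continuous_betaExt f).add (continuous_betaExt g)) fun x => by
      simp [betaExt_unit]

@[simp]
theorem betaEquiv_apply (f : X →ᵇ 𝕜) (p : StoneCech X) : betaEquiv f p = betaExt f p := rfl

theorem norm_betaEquiv (f : X →ᵇ 𝕜) : ‖betaEquiv f‖ = ‖f‖ := by
  refine le_antisymm ((ContinuousMap.norm_le _ (norm_nonneg f)).mpr (norm_betaExt_le f))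
    ((norm_le (norm_nonneg _)).mpr fun x => ?_)
  simpa only [betaEquiv_apply, betaExt_unit] using (betaEquiv f).norm_coe_le_norm (stoneCechUnit x)

noncomputable def betaHomeomorph : (X →ᵇ 𝕜) ≃ₜ C(StoneCech X, 𝕜) :=
  IsometryEquiv.toHomeomorph
    ⟨betaEquiv.toEquiv, AddMonoidHomClass.isometry_of_norm betaEquiv norm_betaEquiv⟩

theorem coe_map_betaEquiv (G : Ideal (X →ᵇ 𝕜)) :
    (G.map betaEquiv : Set C(StoneCech X, 𝕜)) = betaHomeomorph.symm ⁻¹' G := by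
  rw [← Ideal.comap_symm, Ideal.coe_comap]
  rfl

end BetaExtension

namespace ContinuousMap

variable {K : Type*} [TopologicalSpace K] [CompactSpace K] [T2Space K] {𝕜 : Type*} [RCLike 𝕜]

theorem coe_eq_closure_iff_setOfIdeal_eq {I J : Ideal C(K, 𝕜)} (hJ : IsClosed (J : Set C(K, 𝕜))) :
    (J : Set C(K, 𝕜)) = closure I ↔ setOfIdeal J = setOfIdeal I := by
  conv_lhs => rw [← Ideal.coe_closure, ← idealOfSet_ofIdeal_eq_closure,
    ← idealOfSet_ofIdeal_isClosed hJ, SetLike.coe_set_eq]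
  refine ⟨fun h => ?_, congrArg (idealOfSet 𝕜)⟩
  simpa only [setOfIdeal_ofSet_of_isOpen 𝕜 (setOfIdeal_open _)] using congrArg setOfIdeal h

end ContinuousMap

section LambdaSet

variable {X : Type*} [TopologicalSpace X] {𝕜 : Type*} [RCLike 𝕜]

open ContinuousMap

theorem lambdaSet_eq_setOfIdeal (G : Ideal (X →ᵇ 𝕜)) :
    lambdaSet G = setOfIdeal (G.map betaEquiv) := by
  ext p
  simp [lambdaSet, mem_setOfIdeal, Ideal.mem_map_of_equiv]

theorem isOpen_lambdaSet (G : Ideal (X →ᵇ 𝕜)) : IsOpen (lambdaSet G) :=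
  lambdaSet_eq_setOfIdeal G ▸ setOfIdeal_open _

theorem lambdaSet_mono : Monotone (lambdaSet : Ideal (X →ᵇ 𝕜) → Set (StoneCech X)) := by
  intro G₁ G₂ h
  simpa only [lambdaSet_eq_setOfIdeal] using
    (ideal_gc (StoneCech X) 𝕜).monotone_l (Ideal.map_mono h)

theorem lambdaSet_sup (G₁ G₂ : Ideal (X →ᵇ 𝕜)) :
    lambdaSet (G₁ ⊔ G₂) = lambdaSet G₁ ∪ lambdaSet G₂ := by
  simp only [lambdaSet_eq_setOfIdeal, Ideal.map_sup, (ideal_gc (StoneCech X) 𝕜).l_sup]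
  rfl

theorem lambdaSet_iSup {ι : Sort*} (G : ι → Ideal (X →ᵇ 𝕜)) :
    lambdaSet (⨆ i, G i) = ⋃ i, lambdaSet (G i) := by
  simp only [lambdaSet_eq_setOfIdeal, Ideal.map_iSup, (ideal_gc (StoneCech X) 𝕜).l_iSup]
  rfl

theorem coe_eq_closure_iff_lambdaSet_eq {H : Ideal (X →ᵇ 𝕜)} (hH : IsClosed (H : Set (X →ᵇ 𝕜)))
    (G : Ideal (X →ᵇ 𝕜)) : (H : Set (X →ᵇ 𝕜)) = closure G ↔ lambdaSet H = lambdaSet G := by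
  have hH' : IsClosed (H.map betaEquiv : Set C(StoneCech X, 𝕜)) := by
    rw [coe_map_betaEquiv]
    exact hH.preimage betaHomeomorph.symm.continuous
  rw [lambdaSet_eq_setOfIdeal, lambdaSet_eq_setOfIdeal, ← coe_eq_closure_iff_setOfIdeal_eq hH',
    coe_map_betaEquiv, coe_map_betaEquiv, ← betaHomeomorph.symm.preimage_closure]
  exact (Set.preimage_injective.mpr betaHomeomorph.symm.surjective).eq_iff.symm

theorem le_of_lambdaSet_subset {G H : Ideal (X →ᵇ 𝕜)} (hH : IsClosed (H : Set (X →ᵇ 𝕜)))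
    (h : lambdaSet G ⊆ lambdaSet H) : G ≤ H := by
  have hHG : (H : Set (X →ᵇ 𝕜)) = closure (G ⊔ H : Ideal (X →ᵇ 𝕜)) :=
    (coe_eq_closure_iff_lambdaSet_eq hH _).mpr (by rw [lambdaSet_sup, union_eq_right.mpr h])
  exact fun g hg => hHG.ge (subset_closure (Ideal.mem_sup_left hg))

theorem isClosed_comap_idealOfSet (V : Set (StoneCech X)) :
    IsClosed ((idealOfSet 𝕜 V).comap betaEquiv : Set (X →ᵇ 𝕜)) :=
  (idealOfSet_closed 𝕜 V).preimage betaHomeomorph.continuous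

theorem lambdaSet_comap_idealOfSet {V : Set (StoneCech X)} (hV : IsOpen V) :
    lambdaSet ((idealOfSet 𝕜 V).comap betaEquiv) = V := by
  rw [lambdaSet_eq_setOfIdeal, Ideal.map_comap_of_surjective _ betaEquiv.surjective,
    setOfIdeal_ofSet_of_isOpen 𝕜 hV]

end LambdaSet

section CountablyCompact

variable {K : Type*} [TopologicalSpace K] {U : Set K}

theorem countablyCompactSpace'_iff_of_isOpen [T2Space K] (hU : IsOpen U) :
    CountablyCompactSpace' U ↔
      ∀ V : ℕ → Set K, (∀ n, IsOpen (V n)) → (∀ n, V n ⊆ U) → U = ⋃ n, V n →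
        ∃ m, 0 < m ∧ U = ⋃ n ∈ Finset.range m, V n := by
  refine (and_iff_right (inferInstanceAs (T2Space U))).trans
    ⟨fun h V hV hVU hcov => ?_, fun h W hW hcov => ?_⟩
  · obtain ⟨t, ht⟩ := h (fun n => Subtype.val ⁻¹' V n)
      (fun n => (hV n).preimage continuous_subtype_val)
      (by rw [← preimage_iUnion, ← hcov, Subtype.coe_preimage_self])
    obtain ⟨m, htm⟩ := t.exists_nat_subset_range
    refine ⟨m + 1, m.succ_pos, (iUnion₂_subset fun n _ => hVU n).antisymm' fun x hx => ?_⟩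
    obtain ⟨n, hn, hxn⟩ := mem_iUnion₂.mp (ht.ge (mem_univ (⟨x, hx⟩ : U)))
    have : n < m := Finset.mem_range.mp (htm hn)
    exact mem_iUnion₂.mpr ⟨n, Finset.mem_range.mpr (by omega), hxn⟩
  · obtain ⟨m, -, hm⟩ := h (fun n => Subtype.val '' W n)
      (fun n => hU.isOpenMap_subtype_val _ (hW n)) (fun n => Subtype.coe_image_subset U _)
      (by rw [← image_iUnion, hcov, image_univ, Subtype.range_coe])
    refine ⟨Finset.range m, (image_injective.mpr Subtype.val_injective) ?_⟩
    rw [image_iUnion₂, image_univ, Subtype.range_coe]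
    exact hm.symm

theorem finite_subcover_iff_forall_ne_iUnion_of_monotone (U : Set K) :
    (∀ V : ℕ → Set K, (∀ n, IsOpen (V n)) → (∀ n, V n ⊆ U) → U = ⋃ n, V n →
        ∃ m, 0 < m ∧ U = ⋃ n ∈ Finset.range m, V n) ↔
      ∀ V : ℕ → Set K, (∀ n, IsOpen (V n)) → (∀ n, V n ⊆ U) → (∀ n, V n ≠ U) → Monotone V →
        U ≠ ⋃ n, V n := by
  refine ⟨fun h V hV hVU hne hmono hcov => ?_, fun h V hV hVU hcov => ?_⟩
  · obtain ⟨m, hm, hUm⟩ := h V hV hVU hcov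
    refine hne (m - 1) ((hVU _).antisymm (hUm.trans_subset (iUnion₂_subset fun n hn => ?_)))
    exact hmono (by rw [Finset.mem_range] at hn; omega)
  · by_contra! hfin
    refine h (accumulate V) (fun n => isOpen_biUnion fun k _ => hV k)
      (fun n => iUnion₂_subset fun k _ => hVU k) (fun n hn => hfin (n + 1) n.succ_pos ?_)
      monotone_accumulate (by rwa [iUnion_accumulate])
    simp only [← hn, accumulate_eq_biInter_lt, Finset.mem_range]

end CountablyCompact

section SubidealConditions

variable {X : Type*} [TopologicalSpace X] {𝕜 : Type*} [RCLike 𝕜] {H : Ideal (X →ᵇ 𝕜)}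

open ContinuousMap

theorem closure_iSup_range_iff_finite_subcover (hH : IsClosed (H : Set (X →ᵇ 𝕜))) :
    (∀ Hs : ℕ → Ideal (X →ᵇ 𝕜),
      (∀ n, IsClosed ((Hs n : Set (X →ᵇ 𝕜)))) → (∀ n, Hs n ≤ H) →
      (H : Set (X →ᵇ 𝕜)) = closure ((⨆ n, Hs n : Ideal (X →ᵇ 𝕜)) : Set (X →ᵇ 𝕜)) →
      ∃ m : ℕ, 0 < m ∧
        (H : Set (X →ᵇ 𝕜)) =
          closure ((⨆ n ∈ Finset.range m, Hs n : Ideal (X →ᵇ 𝕜)) : Set (X →ᵇ 𝕜))) ↔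
    ∀ V : ℕ → Set (StoneCech X), (∀ n, IsOpen (V n)) → (∀ n, V n ⊆ lambdaSet H) →
      lambdaSet H = ⋃ n, V n → ∃ m, 0 < m ∧ lambdaSet H = ⋃ n ∈ Finset.range m, V n := by
  simp only [coe_eq_closure_iff_lambdaSet_eq hH, lambdaSet_iSup]
  refine ⟨fun h V hV hVH hcov => ?_, fun h Hs _ hHs hcov => ?_⟩
  · have hlam (n : ℕ) := lambdaSet_comap_idealOfSet (𝕜 := 𝕜) (hV n)
    simpa only [hlam] using h _ (fun n => isClosed_comap_idealOfSet (V n))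
      (fun n => le_of_lambdaSet_subset hH ((hlam n).trans_subset (hVH n))) (by simpa only [hlam])
  · exact h _ (fun n => isOpen_lambdaSet _) (fun n => lambdaSet_mono (hHs n)) hcov

theorem ne_closure_iUnion_iff_ne_iUnion_of_monotone (hH : IsClosed (H : Set (X →ᵇ 𝕜))) :
    (∀ Hs : ℕ → Ideal (X →ᵇ 𝕜),
      (∀ n, IsClosed ((Hs n : Set (X →ᵇ 𝕜)))) → (∀ n, Hs n ≤ H) → (∀ n, Hs n ≠ H) →
      Monotone Hs →
      (H : Set (X →ᵇ 𝕜)) ≠ closure (⋃ n, (Hs n : Set (X →ᵇ 𝕜)))) ↔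
    ∀ V : ℕ → Set (StoneCech X), (∀ n, IsOpen (V n)) → (∀ n, V n ⊆ lambdaSet H) →
      (∀ n, V n ≠ lambdaSet H) → Monotone V → lambdaSet H ≠ ⋃ n, V n := by
  refine ⟨fun h V hV hVH hne hmono hcov => ?_, fun h Hs hHscl hHs hne hmono hcov => ?_⟩
  · have hlam (n : ℕ) := lambdaSet_comap_idealOfSet (𝕜 := 𝕜) (hV n)
    have hmono' : Monotone fun n => (idealOfSet 𝕜 (V n)).comap betaEquiv :=
      fun a b hab => Ideal.comap_mono ((ideal_gc _ 𝕜).monotone_u (hmono hab))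
    refine h _ (fun n => isClosed_comap_idealOfSet (V n))
      (fun n => le_of_lambdaSet_subset hH ((hlam n).trans_subset (hVH n)))
      (fun n hn => hne n (by rw [← hlam n, hn])) hmono' ?_
    rw [← Submodule.coe_iSup_of_directed _ hmono'.directed_le,
      coe_eq_closure_iff_lambdaSet_eq hH, lambdaSet_iSup]
    simpa only [hlam]
  · rw [← Submodule.coe_iSup_of_directed Hs hmono.directed_le,
      coe_eq_closure_iff_lambdaSet_eq hH, lambdaSet_iSup] at hcov
    refine h _ (fun n => isOpen_lambdaSet _) (fun n => lambdaSet_mono (hHs n))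
      (fun n hn => hne n ?_) (lambdaSet_mono.comp hmono) hcov
    exact le_antisymm (le_of_lambdaSet_subset hH hn.le) (le_of_lambdaSet_subset (hHscl n) hn.ge)

end SubidealConditions

theorem spectrum_countablyCompact_tfae_general {X : Type*} [TopologicalSpace X]
    {𝕜 : Type*} [RCLike 𝕜] (H : Ideal (X →ᵇ 𝕜))
    (hcl : IsClosed (H : Set (X →ᵇ 𝕜))) :
    List.TFAE
      [CountablyCompactSpace' (lambdaSet H),
       ∀ Hs : ℕ → Ideal (X →ᵇ 𝕜),
         (∀ n, IsClosed ((Hs n : Set (X →ᵇ 𝕜)))) → (∀ n, Hs n ≤ H) →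
         (H : Set (X →ᵇ 𝕜)) = closure ((⨆ n, Hs n : Ideal (X →ᵇ 𝕜)) : Set (X →ᵇ 𝕜)) →
         ∃ m : ℕ, 0 < m ∧
           (H : Set (X →ᵇ 𝕜)) =
             closure ((⨆ n ∈ Finset.range m, Hs n : Ideal (X →ᵇ 𝕜)) : Set (X →ᵇ 𝕜)),
       ∀ Hs : ℕ → Ideal (X →ᵇ 𝕜),
         (∀ n, IsClosed ((Hs n : Set (X →ᵇ 𝕜)))) → (∀ n, Hs n ≤ H) → (∀ n, Hs n ≠ H) →
         Monotone Hs →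
         (H : Set (X →ᵇ 𝕜)) ≠ closure (⋃ n, (Hs n : Set (X →ᵇ 𝕜)))] := by
  tfae_have 1 ↔ 2 := (countablyCompactSpace'_iff_of_isOpen (isOpen_lambdaSet H)).trans
    (closure_iSup_range_iff_finite_subcover hcl).symm
  tfae_have 2 ↔ 3 := (closure_iSup_range_iff_finite_subcover hcl).trans <|
    (finite_subcover_iff_forall_ne_iUnion_of_monotone _).trans
      (ne_closure_iUnion_iff_ne_iUnion_of_monotone hcl).symm
  tfae_finish

/-- For a Tychonoff space `X` and a non-vanishing closed ideal `H` of `C_B(X)`, the following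
are equivalent: (1) `sp(H)` is countably compact; (2) whenever `H` is the closure of the sum of
a sequence of closed subideals, it is the closure of a finite partial sum; (3) for every
increasing sequence of proper closed subideals of `H`, `H` is not the closure of their
union. -/
theorem spectrum_countablyCompact_tfae {X : Type*} [TopologicalSpace X] [T35Space X]
    {𝕜 : Type*} [RCLike 𝕜] (H : Ideal (X →ᵇ 𝕜))
    (hcl : IsClosed (H : Set (X →ᵇ 𝕜))) (hnv : ∀ x : X, ∃ h ∈ H, h x ≠ 0) :
    List.TFAE
      [CountablyCompactSpace' (lambdaSet H),
       ∀ Hs : ℕ → Ideal (X →ᵇ 𝕜),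
         (∀ n, IsClosed ((Hs n : Set (X →ᵇ 𝕜)))) → (∀ n, Hs n ≤ H) →
         (H : Set (X →ᵇ 𝕜)) = closure ((⨆ n, Hs n : Ideal (X →ᵇ 𝕜)) : Set (X →ᵇ 𝕜)) →
         ∃ m : ℕ, 0 < m ∧
           (H : Set (X →ᵇ 𝕜)) =
             closure ((⨆ n ∈ Finset.range m, Hs n : Ideal (X →ᵇ 𝕜)) : Set (X →ᵇ 𝕜)),
       ∀ Hs : ℕ → Ideal (X →ᵇ 𝕜),
         (∀ n, IsClosed ((Hs n : Set (X →ᵇ 𝕜)))) → (∀ n, Hs n ≤ H) → (∀ n, Hs n ≠ H) →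
         Monotone Hs →
         (H : Set (X →ᵇ 𝕜)) ≠ closure (⋃ n, (Hs n : Set (X →ᵇ 𝕜)))] :=
  spectrum_countablyCompact_tfae_general H hcl
end

section
/- Let X be a completely regular Hausdorff (Tychonoff) space and let G₁ and G₂ be ideals of C_B(X). Then λ_{G₁ ∩ G₂} X = λ_{G₁} X ∩ λ_{G₂} X. -/
open BoundedContinuousFunction Set Filter Topology

section Preamble

variable {X : Type*} [TopologicalSpace X] {𝕜 : Type*} [RCLike 𝕜]

theorem betaExt_mul (f g : X →ᵇ 𝕜) (p : StoneCech X) :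
    betaExt (f * g) p = betaExt f p * betaExt g p := by
  have h : betaExt (f * g) = fun q => betaExt f q * betaExt g q := by
    apply Continuous.ext_on denseRange_stoneCechUnit (continuous_betaExt _)
      ((continuous_betaExt f).mul (continuous_betaExt g))
    rintro _ ⟨x, rfl⟩
    simp [betaExt_unit]
  exact congrFun h p

end Preamble

/-- For a Tychonoff space `X` and ideals `G₁`, `G₂` of `C_B(X)`,
`λ_{G₁ ∩ G₂} X = λ_{G₁} X ∩ λ_{G₂} X`. -/
theorem lambdaSet_inf {X : Type*} [TopologicalSpace X] [T35Space X]
    {𝕜 : Type*} [RCLike 𝕜] (G₁ G₂ : Ideal (X →ᵇ 𝕜)) :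
    lambdaSet (G₁ ⊓ G₂) = lambdaSet G₁ ∩ lambdaSet G₂ := by
  apply Set.Subset.antisymm
  · intro p hp
    obtain ⟨g, hg, hgp⟩ := Set.mem_iUnion₂.mp hp
    exact ⟨Set.mem_iUnion₂.mpr ⟨g, hg.1, hgp⟩, Set.mem_iUnion₂.mpr ⟨g, hg.2, hgp⟩⟩
  · rintro p ⟨hp₁, hp₂⟩
    obtain ⟨g₁, hg₁, hp₁⟩ := Set.mem_iUnion₂.mp hp₁
    obtain ⟨g₂, hg₂, hp₂⟩ := Set.mem_iUnion₂.mp hp₂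
    refine Set.mem_iUnion₂.mpr ⟨g₁ * g₂, ⟨G₁.mul_mem_right g₂ hg₁, G₂.mul_mem_left g₁ hg₂⟩, ?_⟩
    show betaExt (g₁ * g₂) p ≠ 0
    rw [betaExt_mul]
    exact mul_ne_zero hp₁ hp₂
end
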